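/- Maximal leakage satisfies the data processing inequality: if Y − X − Z is a Markov chain of finite random variables, then L(Y → Z) ≤ L(X → Z). -/

import Mathlib

/-!
Write `P(b | a)` for the conditional distribution of a joint weight `p a b`. The Markov
condition says `r y x z = P(y, x) · P(z | x)`, so `P(y, z) = ∑ₓ P(y, x) P(z | x)` is at most
`P(y) · maxₓ P(z | x)`. Hence every `P(z | y)` is bounded by `maxₓ P(z | x)`, and summing over `z`
and taking `log₂` gives the inequality; the left-hand sum is at least `∑_z P(z | y₀) = 1` for any
`y₀` of positive mass, so the logarithm is monotone there.
-/

open scoped BigOperators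
noncomputable section

/-- A joint pmf on a triple of finite alphabets. -/
def IsJointPMF3 {Y X Z : Type} [Fintype Y] [Fintype X] [Fintype Z] (r : Y → X → Z → ℝ) : Prop :=
  (∀ y x z, 0 ≤ r y x z) ∧ ∑ y, ∑ x, ∑ z, r y x z = 1

/-- Markov chain Y − X − Z: Y and Z are conditionally independent given X
(joint indexed as r y x z). -/
def MarkovYXZ {Y X Z : Type} [Fintype Y] [Fintype Z] (r : Y → X → Z → ℝ) : Prop :=
  ∀ y x z, r y x z * (∑ y', ∑ z', r y' x z') = (∑ z', r y x z') * (∑ y', r y' x z)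

/-- Closed form of maximal leakage: L(A → B) = log₂(∑_b max_{a : P_A(a)>0} P_{B|A}(b|a)).
(For a outside the support of P_A the conditional is 0/0 = 0, so the max over all a
equals the max over the support.) -/
def maxLeak {A B : Type} [Fintype A] [Fintype B] [Nonempty A] (p : A → B → ℝ) : ℝ :=
  Real.logb 2 (∑ b, Finset.univ.sup' Finset.univ_nonempty fun a => p a b / ∑ b', p a b')

open Finset

section CondDist

variable {A B C : Type} [Fintype B]

/-- `P(b | a)`; it is `0` on a row of total mass `0`. -/
def condDist (p : A → B → ℝ) (a : A) (b : B) : ℝ :=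
  p a b / ∑ b', p a b'

theorem condDist_nonneg {p : A → B → ℝ} (hp : ∀ a b, 0 ≤ p a b) (a : A) (b : B) :
    0 ≤ condDist p a b :=
  div_nonneg (hp a b) (sum_nonneg fun b' _ => hp a b')

theorem sum_condDist {p : A → B → ℝ} {a : A} (ha : ∑ b, p a b ≠ 0) :
    ∑ b, condDist p a b = 1 := by
  simp only [condDist, ← sum_div, div_self ha]

theorem one_le_sum_sup'_condDist [Fintype A] [Nonempty A] {p : A → B → ℝ} {a : A}
    (ha : ∑ b, p a b ≠ 0) :
    1 ≤ ∑ b, univ.sup' univ_nonempty fun a => condDist p a b :=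
  calc 1 = ∑ b, condDist p a b := (sum_condDist ha).symm
    _ ≤ _ := sum_le_sum fun b _ => le_sup' (fun a => condDist p a b) (mem_univ a)

theorem maxLeak_le_maxLeak [Fintype A] [Fintype C] [Nonempty A] [Nonempty C]
    {p : A → B → ℝ} {q : C → B → ℝ} (hp : ∃ a, ∑ b, p a b ≠ 0)
    (h : ∀ a b, condDist p a b ≤ univ.sup' univ_nonempty fun c => condDist q c b) :
    maxLeak p ≤ maxLeak q := by
  obtain ⟨a, ha⟩ := hp
  exact Real.logb_le_logb_of_le one_lt_two
    (zero_lt_one.trans_le (one_le_sum_sup'_condDist ha))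
    (sum_le_sum fun b _ => sup'_le _ _ fun a _ => h a b)

end CondDist

namespace MarkovYXZ

variable {Y X Z : Type} [Fintype Y] [Fintype Z] {r : Y → X → Z → ℝ}

theorem eq_mul_condDist (hr : ∀ y x z, 0 ≤ r y x z) (hmc : MarkovYXZ r) (y : Y) (x : X) (z : Z) :
    r y x z = (∑ z', r y x z') * condDist (fun x z => ∑ y, r y x z) x z := by
  have hswap : ∑ z', ∑ y', r y' x z' = ∑ y', ∑ z', r y' x z' := sum_comm
  by_cases hx : ∑ y', ∑ z', r y' x z' = 0
  · have hrow := (sum_eq_zero_iff_of_nonneg fun y' _ =>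
      sum_nonneg fun z' _ => hr y' x z').1 hx y (mem_univ y)
    have hyxz := (sum_eq_zero_iff_of_nonneg fun z' _ => hr y x z').1 hrow z (mem_univ z)
    simp only [condDist, hswap, hx, div_zero, mul_zero, hyxz]
  · rw [condDist, hswap, mul_div_assoc', eq_div_iff hx]
    exact hmc y x z

theorem condDist_le_sup' [Fintype X] [Nonempty X] (hr : ∀ y x z, 0 ≤ r y x z)
    (hmc : MarkovYXZ r) (y : Y) (z : Z) :
    condDist (fun y z => ∑ x, r y x z) y z ≤
      univ.sup' univ_nonempty fun x => condDist (fun x z => ∑ y, r y x z) x z := by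
  set M := univ.sup' univ_nonempty fun x => condDist (fun x z => ∑ y, r y x z) x z
  have hXZ : ∀ x z, 0 ≤ ∑ y, r y x z := fun x z => sum_nonneg fun y _ => hr y x z
  have hle_M : ∀ x, condDist (fun x z => ∑ y, r y x z) x z ≤ M := fun x =>
    le_sup' (fun x => condDist (fun x z => ∑ y, r y x z) x z) (mem_univ x)
  have hM : 0 ≤ M := (condDist_nonneg hXZ (Classical.arbitrary X) z).trans (hle_M _)
  refine div_le_of_le_mul₀ (sum_nonneg fun z' _ => sum_nonneg fun x _ => hr y x z') hM ?_
  calc ∑ x, r y x z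
      = ∑ x, (∑ z', r y x z') * condDist (fun x z => ∑ y, r y x z) x z :=
        sum_congr rfl fun x _ => eq_mul_condDist hr hmc y x z
    _ ≤ ∑ x, (∑ z', r y x z') * M :=
        sum_le_sum fun x _ => mul_le_mul_of_nonneg_left (hle_M x)
          (sum_nonneg fun z' _ => hr y x z')
    _ = M * ∑ z', ∑ x, r y x z' := by rw [← sum_mul, sum_comm, mul_comm]

end MarkovYXZ

theorem maximal_leakage_dpi_general
    {Y X Z : Type} [Fintype Y] [Fintype X] [Fintype Z] [Nonempty Y] [Nonempty X]
    (r : Y → X → Z → ℝ) (hr : IsJointPMF3 r) (hmc : MarkovYXZ r) :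
    maxLeak (fun y z => ∑ x, r y x z) ≤ maxLeak (fun x z => ∑ y, r y x z) := by
  obtain ⟨hnn, htotal⟩ := hr
  have htotal' : ∑ y, ∑ z, ∑ x, r y x z ≠ 0 := by
    simp_rw [sum_comm (γ := Z)]
    exact htotal ▸ one_ne_zero
  obtain ⟨y, -, hy⟩ := exists_ne_zero_of_sum_ne_zero htotal'
  exact maxLeak_le_maxLeak ⟨y, hy⟩ (hmc.condDist_le_sup' hnn)

/-- data processing inequality for maximal leakage:
if Y − X − Z is a Markov chain then L(Y → Z) ≤ L(X → Z). -/
theorem maximal_leakage_dpi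
    {Y X Z : Type} [Fintype Y] [Fintype X] [Fintype Z] [Nonempty Y] [Nonempty X] [Nonempty Z]
    (r : Y → X → Z → ℝ) (hr : IsJointPMF3 r) (hmc : MarkovYXZ r) :
    maxLeak (fun y z => ∑ x, r y x z) ≤ maxLeak (fun x z => ∑ y, r y x z) :=
  maximal_leakage_dpi_general r hr hmc
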